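/- Every weakly reflective full subcategory that is closed under retracts and under fibres in a triangulated category with (small) products is reflective. -/

import Mathlib

/-!
Let `l : X ⟶ X'` be a weak reflection into `S`. If `h : X' ⟶ W` with `W ∈ S` satisfies
`l ≫ h = 0`, then `l` factors through the fibre of `h`, which lies in `S`, so the weak universal
property yields an endomorphism `e` of `X'` with `l ≫ e = l` and `e ≫ h = 0`. Applied to the
product of all endomorphisms of `X'` killed by `l` (products of objects of `S` are retracts of
their weak reflections, hence in `S`), this gives a single `e` killing every such `h`; in
particular `e` is idempotent. Idempotents split in a triangulated category with countable
products (Bökstedt–Neeman), and `l` followed by the projection onto the image of `e` is a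
reflection: its image in `S` is a retract of `X'`, and `e` forces uniqueness of factorisations.
-/

open CategoryTheory Category Limits Pretriangulated

universe v u

namespace Paper

section General

variable {T : Type u} [Category.{v} T]

/-- A full subcategory (given by its class of objects) is closed under retracts. -/
def ClosedUnderRetracts (S : Set T) : Prop :=
  ∀ ⦃A B : T⦄, A ∈ S → (∃ (i : B ⟶ A) (r : A ⟶ B), i ≫ r = 𝟙 B) → B ∈ S

/-- A full subcategory is weakly reflective: every object admits a weak reflection into it. -/
def WeaklyReflective (S : Set T) : Prop :=
  ∀ X : T, ∃ (X' : T) (l : X ⟶ X'), X' ∈ S ∧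
    ∀ ⦃Y : T⦄, Y ∈ S → ∀ f : X ⟶ Y, ∃ g : X' ⟶ Y, l ≫ g = f

/-- A full subcategory is weakly coreflective. -/
def WeaklyCoreflective (S : Set T) : Prop :=
  ∀ X : T, ∃ (X' : T) (c : X' ⟶ X), X' ∈ S ∧
    ∀ ⦃Y : T⦄, Y ∈ S → ∀ f : Y ⟶ X, ∃ g : Y ⟶ X', g ≫ c = f

/-- A full subcategory is reflective: the inclusion has a left adjoint. -/
def ReflectiveSet (S : Set T) : Prop :=
  (ObjectProperty.ι (fun X => X ∈ S)).IsRightAdjoint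

/-- A full subcategory is coreflective: the inclusion has a right adjoint. -/
def CoreflectiveSet (S : Set T) : Prop :=
  (ObjectProperty.ι (fun X => X ∈ S)).IsLeftAdjoint

end General

/-- The data of an endofunctor together with a natural transformation from the identity
(a candidate reflection with its unit). -/
structure ReflectionData (T : Type u) [Category.{v} T] where
  L : T ⥤ T
  unit : 𝟭 T ⟶ L

/-- The data of an endofunctor together with a natural transformation to the identity
(a candidate coreflection with its counit). -/
structure CoreflectionData (T : Type u) [Category.{v} T] where
  C : T ⥤ T
  counit : C ⟶ 𝟭 T

section ReflData

variable {T : Type u} [Category.{v} T]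

/-- The `L`-local objects: the essential image of `L`. -/
def ReflectionData.localObjects (R : ReflectionData T) : Set T := R.L.essImage

/-- `(L, l)` is a reflection: every morphism to an `L`-local object factors uniquely
through the unit. -/
def ReflectionData.IsReflection (R : ReflectionData T) : Prop :=
  ∀ ⦃X W : T⦄, W ∈ R.localObjects → ∀ f : X ⟶ W,
    ∃! g : R.L.obj X ⟶ W, R.unit.app X ≫ g = f

/-- The `C`-colocal objects: the essential image of `C`. -/
def CoreflectionData.colocalObjects (Q : CoreflectionData T) : Set T := Q.C.essImage

/-- `(C, c)` is a coreflection: every morphism from a `C`-colocal object factors uniquely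
through the counit. -/
def CoreflectionData.IsCoreflection (Q : CoreflectionData T) : Prop :=
  ∀ ⦃X W : T⦄, W ∈ Q.colocalObjects → ∀ f : W ⟶ X,
    ∃! g : W ⟶ Q.C.obj X, g ≫ Q.counit.app X = f

end ReflData

section Triangulated

variable {T : Type u} [Category.{v} T] [HasZeroObject T] [Preadditive T] [HasShift T ℤ]
  [∀ n : ℤ, (shiftFunctor T n).Additive] [Pretriangulated T]

/-- Closed under fibres: the first vertex of a distinguished triangle whose second and third
vertices lie in `S` lies in `S`. -/
def ClosedUnderFibres (S : Set T) : Prop :=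
  ∀ ⦃X Y Z : T⦄ (u : X ⟶ Y) (v : Y ⟶ Z) (w : Z ⟶ X⟦(1:ℤ)⟧),
    (Triangle.mk u v w ∈ distTriang T) → Y ∈ S → Z ∈ S → X ∈ S

/-- Closed under cofibres. -/
def ClosedUnderCofibres (S : Set T) : Prop :=
  ∀ ⦃X Y Z : T⦄ (u : X ⟶ Y) (v : Y ⟶ Z) (w : Z ⟶ X⟦(1:ℤ)⟧),
    (Triangle.mk u v w ∈ distTriang T) → X ∈ S → Y ∈ S → Z ∈ S

/-- Closed under extensions. -/
def ClosedUnderExtensions (S : Set T) : Prop :=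
  ∀ ⦃X Y Z : T⦄ (u : X ⟶ Y) (v : Y ⟶ Z) (w : Z ⟶ X⟦(1:ℤ)⟧),
    (Triangle.mk u v w ∈ distTriang T) → X ∈ S → Z ∈ S → Y ∈ S

/-- `^⊥D`: objects `X` with `T(X, ΣᵏD) = 0` for all `D ∈ D` and all integers `k`. -/
def leftOrth (D : Set T) : Set T :=
  {X | ∀ ⦃E : T⦄, E ∈ D → ∀ k : ℤ, ∀ f : X ⟶ E⟦k⟧, f = 0}

/-- `D^⊥`: objects `Y` with `T(ΣᵏD, Y) = 0` for all `D ∈ D` and all integers `k`. -/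
def rightOrth (D : Set T) : Set T :=
  {Y | ∀ ⦃E : T⦄, E ∈ D → ∀ k : ℤ, ∀ f : E⟦k⟧ ⟶ Y, f = 0}

/-- `⊾D`: objects `X` with `T(X, ΣᵏD) = 0` for all `D ∈ D` and all `k ≤ 0`. -/
def leftSemiOrth (D : Set T) : Set T :=
  {X | ∀ ⦃E : T⦄, E ∈ D → ∀ k : ℤ, k ≤ 0 → ∀ f : X ⟶ E⟦k⟧, f = 0}

/-- `D⊿`: objects `Y` with `T(ΣᵏD, Y) = 0` for all `D ∈ D` and all `k ≥ 0`. -/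
def rightSemiOrth (D : Set T) : Set T :=
  {Y | ∀ ⦃E : T⦄, E ∈ D → ∀ k : ℤ, 0 ≤ k → ∀ f : E⟦k⟧ ⟶ Y, f = 0}

section WithLimits

variable [HasProducts.{v} T] [HasCoproducts.{v} T]

/-- Closed under all (small) products. -/
def ClosedUnderProducts (S : Set T) : Prop :=
  ∀ ⦃ι : Type v⦄ (f : ι → T), (∀ i, f i ∈ S) → (∏ᶜ f) ∈ S

/-- Closed under all (small) coproducts. -/
def ClosedUnderCoproducts (S : Set T) : Prop :=
  ∀ ⦃ι : Type v⦄ (f : ι → T), (∀ i, f i ∈ S) → (∐ f) ∈ S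

/-- Semilocalizing: closed under coproducts, cofibres and extensions. -/
def IsSemilocalizing (S : Set T) : Prop :=
  ClosedUnderCoproducts S ∧ ClosedUnderCofibres S ∧ ClosedUnderExtensions S

/-- Semicolocalizing: closed under products, fibres and extensions. -/
def IsSemicolocalizing (S : Set T) : Prop :=
  ClosedUnderProducts S ∧ ClosedUnderFibres S ∧ ClosedUnderExtensions S

/-- Localizing: closed under coproducts, fibres, cofibres and extensions. -/
def IsLocalizing (S : Set T) : Prop :=
  ClosedUnderCoproducts S ∧ ClosedUnderFibres S ∧ ClosedUnderCofibres S ∧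
    ClosedUnderExtensions S

/-- Colocalizing: closed under products, fibres, cofibres and extensions. -/
def IsColocalizing (S : Set T) : Prop :=
  ClosedUnderProducts S ∧ ClosedUnderFibres S ∧ ClosedUnderCofibres S ∧
    ClosedUnderExtensions S

/-- The smallest semilocalizing subcategory containing `D`. -/
def semiloc (D : Set T) : Set T := ⋂₀ {S : Set T | IsSemilocalizing S ∧ D ⊆ S}

/-- The smallest semicolocalizing subcategory containing `D`. -/
def semicoloc (D : Set T) : Set T := ⋂₀ {S : Set T | IsSemicolocalizing S ∧ D ⊆ S}

/-- The smallest localizing subcategory containing `D`. -/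
def loc (D : Set T) : Set T := ⋂₀ {S : Set T | IsLocalizing S ∧ D ⊆ S}

/-- The smallest colocalizing subcategory containing `D`. -/
def coloc (D : Set T) : Set T := ⋂₀ {S : Set T | IsColocalizing S ∧ D ⊆ S}

end WithLimits

end Triangulated

section Reflection

variable {T : Type u} [Category.{v} T]

def IsReflectionArrow (S : Set T) {X I : T} (η : X ⟶ I) : Prop :=
  I ∈ S ∧ ∀ ⦃W : T⦄, W ∈ S → ∀ f : X ⟶ W, ∃! g : I ⟶ W, η ≫ g = f

def IsWeakReflectionArrow (S : Set T) {X X' : T} (l : X ⟶ X') : Prop :=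
  X' ∈ S ∧ ∀ ⦃W : T⦄, W ∈ S → ∀ f : X ⟶ W, ∃ g : X' ⟶ W, l ≫ g = f

lemma reflectiveSet_of_forall_exists_isReflectionArrow (S : Set T)
    (h : ∀ X : T, ∃ (I : T) (η : X ⟶ I), IsReflectionArrow S η) : ReflectiveSet S := by
  refine Functor.isRightAdjoint_of_leftAdjointObjIsDefined_eq_top (top_unique fun X _ => ?_)
  obtain ⟨I, η, hI, hη⟩ := h X
  refine Functor.CorepresentableBy.isCorepresentable (X := ⟨I, hI⟩)
    { homEquiv {W} := Equiv.ofBijective (fun g => η ≫ g.hom)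
        ⟨fun g₁ g₂ hg => ObjectProperty.hom_ext _ ((hη W.property _).unique hg rfl),
          fun f => ⟨ObjectProperty.homMk (hη W.property f).exists.choose,
            (hη W.property f).exists.choose_spec⟩⟩
      homEquiv_comp := fun _ _ => (Category.assoc _ _ _).symm }

lemma prod_mem_of_weaklyReflective {S : Set T} (hweak : WeaklyReflective S)
    (hretr : ClosedUnderRetracts S) {ι : Type*} (f : ι → T) [HasProduct f]
    (hf : ∀ i, f i ∈ S) : ∏ᶜ f ∈ S := by
  obtain ⟨P, l, hP, hl⟩ := hweak (∏ᶜ f)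
  choose g hg using fun i => hl (hf i) (Pi.π f i)
  exact hretr hP ⟨l, Pi.lift g, Pi.hom_ext _ _ fun i => by simp [hg]⟩

end Reflection

section IdempotentCompleteness

variable {T : Type u} [Category.{v} T] {Y : T} [HasProduct fun _ : ℕ => Y]

noncomputable def telescopeShift (e : Y ⟶ Y) : ∏ᶜ (fun _ : ℕ => Y) ⟶ ∏ᶜ (fun _ : ℕ => Y) :=
  Pi.lift fun n => Pi.π _ (n + 1) ≫ e

@[simp]
lemma telescopeShift_π (e : Y ⟶ Y) (n : ℕ) :
    telescopeShift e ≫ Pi.π _ n = Pi.π _ (n + 1) ≫ e :=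
  Pi.lift_π _ _

lemma isSplitEpi_id_sub_telescopeShift [Preadditive T] {e : Y ⟶ Y} (he : e ≫ e = e) :
    IsSplitEpi (𝟙 _ - telescopeShift e) := by
  -- the section solves `φ n - φ (n + 1) ≫ e = π n` by splitting `π n` along `e` and `𝟙 - e`
  refine ⟨⟨Pi.lift fun n => Pi.π _ n ≫ (𝟙 Y - e) - ∑ k ∈ Finset.range n, Pi.π _ k ≫ e, ?_⟩⟩
  refine Pi.hom_ext _ _ fun n => ?_
  simp only [Preadditive.comp_sub, Preadditive.sub_comp, Preadditive.add_comp, Preadditive.sum_comp,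
    comp_id, id_comp, assoc, Pi.lift_π, Pi.lift_π_assoc, telescopeShift_π, Finset.sum_range_succ,
    he, sub_self]
  abel

lemma comp_π_eq_of_comp_id_sub_telescopeShift_eq_zero [Preadditive T] {e : Y ⟶ Y}
    (he : e ≫ e = e) {G : T} {g : G ⟶ ∏ᶜ (fun _ : ℕ => Y)}
    (hg : g ≫ (𝟙 _ - telescopeShift e) = 0) (n : ℕ) :
    g ≫ Pi.π _ n = g ≫ Pi.π _ 0 ≫ e := by
  have step : ∀ n, g ≫ Pi.π _ n = g ≫ Pi.π _ (n + 1) ≫ e := fun n => by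
    simpa [Preadditive.comp_sub, Preadditive.sub_comp, sub_eq_zero] using hg =≫ Pi.π _ n
  have fixed : ∀ n, g ≫ Pi.π _ n ≫ e = g ≫ Pi.π _ n := fun n => by
    rw [← Category.assoc, step n]
    simp [he]
  have const : ∀ n, g ≫ Pi.π _ n = g ≫ Pi.π _ 0 := fun n => by
    induction n with
    | zero => rfl
    | succ n ih => rw [← ih, step n, fixed]
  rw [const n, fixed]

/- The fibre of `𝟙 - telescopeShift e` is the homotopy limit of `⋯ ⟶ Y ⟶ Y` along `e`, i.e. the
image of `e`; it embeds into the product because `𝟙 - telescopeShift e` is split epi. -/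
variable (T) in
theorem isIdempotentComplete_of_hasCountableProducts [HasZeroObject T] [Preadditive T]
    [HasShift T ℤ] [∀ n : ℤ, (shiftFunctor T n).Additive] [Pretriangulated T]
    [HasCountableProducts T] : IsIdempotentComplete T := by
  refine ⟨fun Y e he => ?_⟩
  have := isSplitEpi_id_sub_telescopeShift he
  obtain ⟨Z, c, w, hT⟩ := distinguished_cocone_triangle₁ (𝟙 _ - telescopeShift e)
  have : Mono c := Triangle.mono₁ _ hT (Triangle.mor₃_eq_zero_of_epi₂ _ hT
    (inferInstance : Epi (𝟙 _ - telescopeShift e)))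
  have hcu : c ≫ (𝟙 _ - telescopeShift e) = 0 := comp_distTriang_mor_zero₁₂ _ hT
  have hdiag : (Pi.lift fun _ => e) ≫ (𝟙 _ - telescopeShift e) = 0 :=
    Pi.hom_ext _ _ fun n => by simp [Preadditive.comp_sub, Preadditive.sub_comp, he]
  obtain ⟨s, hs⟩ : ∃ s : Y ⟶ Z, Pi.lift (fun _ => e) = s ≫ c :=
    Triangle.coyoneda_exact₂ _ hT _ hdiag
  refine ⟨Z, c ≫ Pi.π _ 0, s, ?_, ?_⟩
  · rw [← cancel_mono c, Category.assoc, Category.assoc, ← hs, Category.id_comp]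
    exact Pi.hom_ext _ _ fun n => by
      simpa using (comp_π_eq_of_comp_id_sub_telescopeShift_eq_zero he hcu n).symm
  · rw [← Category.assoc, ← hs, Pi.lift_π]

end IdempotentCompleteness

section WeakReflection

variable {T : Type u} [Category.{v} T] [Preadditive T] {S : Set T} {X X' : T} {l : X ⟶ X'}

lemma IsWeakReflectionArrow.isReflectionArrow_comp (hretr : ClosedUnderRetracts S)
    (hl : IsWeakReflectionArrow S l) {e : X' ⟶ X'} (hle : l ≫ e = l)
    (hkill : ∀ ⦃W : T⦄, W ∈ S → ∀ h : X' ⟶ W, l ≫ h = 0 → e ≫ h = 0)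
    {I : T} {i : I ⟶ X'} {p : X' ⟶ I} (hip : i ≫ p = 𝟙 I) (hpi : p ≫ i = e) :
    IsReflectionArrow S (l ≫ p) := by
  refine ⟨hretr hl.1 ⟨i, p, hip⟩, fun W hW f => ?_⟩
  obtain ⟨g, hg⟩ := hl.2 hW f
  have hpe : e ≫ p = p := by rw [← hpi, Category.assoc, hip, Category.comp_id]
  have hfac : (l ≫ p) ≫ i ≫ g = f := by rw [Category.assoc, reassoc_of% hpi, reassoc_of% hle, hg]
  refine ⟨i ≫ g, hfac, fun y hy => ?_⟩
  have hpy : p ≫ (y - i ≫ g) = 0 := by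
    rw [← hpe, Category.assoc]
    refine hkill hW _ ?_
    rw [← Category.assoc, Preadditive.comp_sub, hy, hfac, sub_self]
  rw [← sub_eq_zero, ← Category.id_comp (y - i ≫ g), ← hip, Category.assoc, hpy, comp_zero]

end WeakReflection

section TriangulatedReflection

variable {T : Type u} [Category.{v} T] [HasZeroObject T] [Preadditive T] [HasShift T ℤ]
  [∀ n : ℤ, (shiftFunctor T n).Additive] [Pretriangulated T] {S : Set T} {X X' : T}
  {l : X ⟶ X'}

lemma IsWeakReflectionArrow.exists_endo_comp_eq_zero (hfib : ClosedUnderFibres S)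
    (hl : IsWeakReflectionArrow S l) {W : T} (hW : W ∈ S) {h : X' ⟶ W} (hlh : l ≫ h = 0) :
    ∃ e : X' ⟶ X', l ≫ e = l ∧ e ≫ h = 0 := by
  obtain ⟨Q, q, w, hT⟩ := distinguished_cocone_triangle₁ h
  obtain ⟨l', hl'⟩ : ∃ l' : X ⟶ Q, l = l' ≫ q := Triangle.coyoneda_exact₂ _ hT l hlh
  obtain ⟨t, ht⟩ := hl.2 (hfib q h w hT hl.1 hW) l'
  refine ⟨t ≫ q, by rw [← Category.assoc, ht, hl'], ?_⟩
  have hqh : q ≫ h = 0 := comp_distTriang_mor_zero₁₂ _ hT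
  rw [Category.assoc, hqh, comp_zero]

lemma IsWeakReflectionArrow.exists_endo_forall_comp_eq_zero [HasProducts.{v} T]
    (hweak : WeaklyReflective S) (hretr : ClosedUnderRetracts S) (hfib : ClosedUnderFibres S)
    (hl : IsWeakReflectionArrow S l) :
    ∃ e : X' ⟶ X', l ≫ e = l ∧ ∀ ⦃W : T⦄, W ∈ S → ∀ h : X' ⟶ W, l ≫ h = 0 → e ≫ h = 0 := by
  let J := {j : X' ⟶ X' // l ≫ j = 0}
  obtain ⟨e, hle, he⟩ := hl.exists_endo_comp_eq_zero hfib
    (prod_mem_of_weaklyReflective hweak hretr (fun _ : J => X') fun _ => hl.1)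
    (h := Pi.lift Subtype.val) (Pi.hom_ext _ _ fun j => by simp [j.2])
  refine ⟨e, hle, fun W hW h hlh => ?_⟩
  obtain ⟨e', hle', he'h⟩ := hl.exists_endo_comp_eq_zero hfib hW hlh
  have hee' : e ≫ (𝟙 X' - e') = 0 := by
    simpa using he =≫ Pi.π (fun _ : J => X') ⟨𝟙 X' - e', by simp [Preadditive.comp_sub, hle']⟩
  rw [Preadditive.comp_sub, Category.comp_id, sub_eq_zero] at hee'
  rw [hee', Category.assoc, he'h, comp_zero]

lemma exists_isReflectionArrow [HasProducts.{v} T] (hweak : WeaklyReflective S)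
    (hretr : ClosedUnderRetracts S) (hfib : ClosedUnderFibres S) (X : T) :
    ∃ (I : T) (η : X ⟶ I), IsReflectionArrow S η := by
  obtain ⟨X', l, hl⟩ := hweak X
  obtain ⟨e, hle, hkill⟩ :=
    IsWeakReflectionArrow.exists_endo_forall_comp_eq_zero hweak hretr hfib hl
  have he : e ≫ e = e := by
    have := hkill hl.1 (𝟙 X' - e) (by simp [Preadditive.comp_sub, hle])
    rwa [Preadditive.comp_sub, Category.comp_id, sub_eq_zero, eq_comm] at this
  obtain ⟨I, i, p, hip, hpi⟩ :=
    (isIdempotentComplete_of_hasCountableProducts T).idempotents_split X' e he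
  exact ⟨I, l ≫ p, IsWeakReflectionArrow.isReflectionArrow_comp hretr hl hle hkill hip hpi⟩

end TriangulatedReflection

section Statements

variable {T : Type u} [Category.{v} T] [HasZeroObject T] [Preadditive T] [HasShift T ℤ]
  [∀ n : ℤ, (shiftFunctor T n).Additive] [Pretriangulated T]
  [HasProducts.{v} T] [HasCoproducts.{v} T]

/-- In a triangulated category with products, every weakly reflective full
subcategory closed under retracts and fibres is reflective. -/
theorem statement13 (S : Set T) (hweak : WeaklyReflective S)
    (hretr : ClosedUnderRetracts S) (hfib : ClosedUnderFibres S) :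
    ReflectiveSet S :=
  reflectiveSet_of_forall_exists_isReflectionArrow S (exists_isReflectionArrow hweak hretr hfib)

end Statements

end Paper
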